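/- Let t ≥ 3 and let p₁ ≤ p₂ ≤ ⋯ ≤ p_t be integers with each p_i ≥ 2. Set p = lcm(p₁,…,p_t) and g = 1 + (1/2)·((t-2)·p - Σᵢ p/pᵢ). Then g < 1 if and only if (p₁,…,p_t) is of the form (2,2,n) with n ≥ 2, or equals (2,3,3), (2,3,4), or (2,3,5). -/

import Mathlib

/-!
Since `p > 0`, `g < 1` says exactly that `∑ 1/pᵢ > t - 2`. Each `1/pᵢ ≤ 1/2`, so this forces
`t = 3`, and what remains is the ADE inequality `1/p₁ + 1/p₂ + 1/p₃ > 1`, whose solutions are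
classified in `Mathlib.NumberTheory.ADEInequality`.
-/

theorem one_add_half_mul_sub_lt_one_iff {K : Type*} [Field K] [LinearOrder K]
    [IsStrictOrderedRing K] {t p s : K} (hp : 0 < p) :
    1 + 1 / 2 * (t * p - p * s) < 1 ↔ t < s := by
  have key : 1 + 1 / 2 * (t * p - p * s) = 1 - p / 2 * (s - t) := by ring
  rw [key, sub_lt_self_iff, mul_pos_iff_of_pos_left (half_pos hp), sub_pos]

theorem List.foldr_lcm_pos {L : List ℕ} (h : ∀ x ∈ L, 0 < x) : 0 < L.foldr Nat.lcm 1 := by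
  induction L with
  | nil => exact Nat.one_pos
  | cons a L ih =>
    rw [List.forall_mem_cons] at h
    exact Nat.lcm_pos h.1 (ih h.2)

theorem List.sum_map_inv_le_half_length {L : List ℕ} (h : ∀ x ∈ L, 2 ≤ x) :
    (L.map fun x : ℕ ↦ (x : ℚ)⁻¹).sum ≤ L.length / 2 := by
  have hle := List.sum_le_card_nsmul (L.map fun x : ℕ ↦ (x : ℚ)⁻¹) 2⁻¹ <| by
    simp only [List.mem_map, forall_exists_index, and_imp, forall_apply_eq_imp_iff₂]
    intro x hx
    exact inv_anti₀ two_pos (by exact_mod_cast h x hx)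
  simpa [nsmul_eq_mul, div_eq_mul_inv] using hle

open ADEInequality in
theorem one_lt_inv_add_inv_add_inv_iff {a b c : ℕ} (ha : 2 ≤ a) (hab : a ≤ b) (hbc : b ≤ c) :
    1 < (a : ℚ)⁻¹ + (b : ℚ)⁻¹ + (c : ℚ)⁻¹ ↔
      (a = 2 ∧ b = 2) ∨ (a = 2 ∧ b = 3 ∧ c = 3) ∨ (a = 2 ∧ b = 3 ∧ c = 4) ∨
        (a = 2 ∧ b = 3 ∧ c = 5) := by
  refine ⟨fun h ↦ ?_, ?_⟩
  · have h' : 1 < sumInv {a.toPNat (by omega), b.toPNat (by omega), c.toPNat (by omega)} := by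
      rwa [sumInv_pqr]
    have ha3 : a < 3 := lt_three hab hbc h'
    obtain rfl : a = 2 := by omega
    have hb4 : b < 4 := lt_four hbc h'
    interval_cases b
    · simp
    have hc6 : c < 6 := lt_six h'
    interval_cases c <;> simp
  · rintro (⟨rfl, rfl⟩ | ⟨rfl, rfl, rfl⟩ | ⟨rfl, rfl, rfl⟩ | ⟨rfl, rfl, rfl⟩) <;> norm_num
    positivity

theorem List.length_sub_two_lt_sum_map_inv_iff {L : List ℕ} (hlen : 3 ≤ L.length)
    (hsort : L.Pairwise (· ≤ ·)) (h2 : ∀ x ∈ L, 2 ≤ x) :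
    (L.length : ℚ) - 2 < (L.map fun x : ℕ ↦ (x : ℚ)⁻¹).sum ↔
      (∃ n : ℕ, 2 ≤ n ∧ L = [2, 2, n]) ∨ L = [2, 3, 3] ∨ L = [2, 3, 4] ∨ L = [2, 3, 5] := by
  obtain hlen3 | hlen4 := hlen.eq_or_lt
  · obtain ⟨a, b, c, rfl⟩ := List.length_eq_three.mp hlen3.symm
    simp only [List.pairwise_cons, List.mem_cons, forall_eq_or_imp, List.not_mem_nil, or_false,
      forall_eq, IsEmpty.forall_iff, forall_const, List.Pairwise.nil, and_true] at hsort h2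
    obtain ⟨⟨hab, -⟩, hbc⟩ := hsort
    obtain ⟨ha, -, hc⟩ := h2
    have hD : (∃ n, 2 ≤ n ∧ [a, b, c] = [2, 2, n]) ↔ a = 2 ∧ b = 2 :=
      ⟨by rintro ⟨n, -, h⟩; simp_all, by rintro ⟨rfl, rfl⟩; exact ⟨c, hc, rfl⟩⟩
    rw [hD]
    norm_num [← add_assoc, one_lt_inv_add_inv_add_inv_iff ha hab hbc]
  · have hsum := L.sum_map_inv_le_half_length h2
    refine iff_of_false (fun h ↦ ?_) ?_
    · have : (4 : ℚ) ≤ L.length := by exact_mod_cast hlen4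
      linarith
    · rintro (⟨n, -, rfl⟩ | rfl | rfl | rfl) <;> simp at hlen4

theorem stmt_10 (L : List ℕ) (hlen : 3 ≤ L.length)
    (hsort : L.Pairwise (· ≤ ·)) (h2 : ∀ x ∈ L, 2 ≤ x)
    (p : ℕ) (hp : p = L.foldr Nat.lcm 1)
    (g : ℚ)
    (hg : g = 1 + (1 / 2) * (((L.length : ℚ) - 2) * p - (L.map fun x => (p : ℚ) / x).sum)) :
    g < 1 ↔ (∃ n : ℕ, 2 ≤ n ∧ L = [2, 2, n]) ∨ L = [2, 3, 3] ∨ L = [2, 3, 4] ∨ L = [2, 3, 5] := by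
  have hp0 : (0 : ℚ) < p := by
    rw [hp]
    exact_mod_cast List.foldr_lcm_pos fun x hx ↦ by linarith [h2 x hx]
  -- In `hg` the list `L` itself is coerced to `List ℚ` (by a monadic lift), not mapped.
  have hsum : (L.map fun x ↦ (p : ℚ) / x).sum = p * (L.map fun x : ℕ ↦ (x : ℚ)⁻¹).sum := by
    simp only [List.bind_eq_flatMap, List.pure_def, ← List.map_eq_flatMap, List.map_map]
    simp_rw [Function.comp_def, div_eq_mul_inv, List.sum_map_mul_left]
  rw [hg, hsum, one_add_half_mul_sub_lt_one_iff hp0]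
  exact List.length_sub_two_lt_sum_map_inv_iff hlen hsort h2
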